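/- If N : ℝ → ℝ is continuous and satisfies limsup_{|v|→∞} N(v)/(sgn(v)|v|^p) < 0 for some p ≥ 2, then there exists a constant C > 0 such that for all v, V ∈ ℝ, (v - V)·(N(v) - N(V)) ≤ C - (1/C)·|v - V|^{p+1}, provided |V| ≤ M for a fixed bound M (with C depending on M, N, p). -/
import Mathlib


/-- Confining estimate: `(v-V)(N(v)-N(V)) ≤ C - |v-V|^{p+1}/C` for `|V| ≤ M`. -/
theorem stmt_0 (N : ℝ → ℝ) (hN : Continuous N) (p : ℝ) (hp : 2 ≤ p)
    (δ R : ℝ) (hδ : 0 < δ) (hR : 0 < R)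
    (hconf₁ : ∀ v : ℝ, R ≤ v → N v ≤ -δ * v ^ p)
    (hconf₂ : ∀ v : ℝ, v ≤ -R → δ * |v| ^ p ≤ N v)
    (L : ℝ) (hL : ∀ v : ℝ, 1 ≤ |v| → |N v| ≤ L * |v| ^ p)
    (M : ℝ) (hM : 0 < M) :
    ∃ C > 0, ∀ v V : ℝ, |V| ≤ M →
      (v - V) * (N v - N V) ≤ C - (1 / C) * |v - V| ^ (p + 1) := by
  have hp0 : (0:ℝ) < p := by linarith
  have hp0' : p ≠ 0 := ne_of_gt hp0
  -- bound B on [-M, M]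
  obtain ⟨B₀, hB₀⟩ := (isCompact_Icc (a := -M) (b := M)).exists_bound_of_continuousOn
    hN.continuousOn
  set B : ℝ := max B₀ 0 with hBdef
  have hB0 : 0 ≤ B := le_max_right _ _
  have hBbd : ∀ x : ℝ, |x| ≤ M → |N x| ≤ B := by
    intro x hx
    have hx' : x ∈ Set.Icc (-M) M :=
      ⟨by linarith [neg_abs_le x], by linarith [le_abs_self x]⟩
    have := hB₀ x hx'
    rw [Real.norm_eq_abs] at this
    exact this.trans (le_max_left _ _)
  have h2p : (0:ℝ) < 2 ^ (p+1) := Real.rpow_pos_of_pos two_pos _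
  have h2pp : (0:ℝ) < 2 ^ p := Real.rpow_pos_of_pos two_pos _
  have h2split : (2:ℝ) ^ (p+1) = 2 ^ p * 2 := Real.rpow_add_one two_ne_zero p
  set X : ℝ := (2 ^ (p+1) * B / δ) ^ (1/p) with hXdef
  have hX0 : 0 ≤ X := Real.rpow_nonneg (by positivity) _
  set K : ℝ := 1 + M + R + 2*M + X with hKdef
  have hK1 : 1 ≤ K := by simp only [hKdef]; linarith [hM.le, hR.le]
  have hK0 : (0:ℝ) < K := lt_of_lt_of_le one_pos hK1
  have hKp : 2 ^ (p+1) * B / δ ≤ K ^ p := by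
    have h1 : X ≤ K := by simp only [hKdef]; linarith [hM.le, hR.le]
    have h2 : X ^ p ≤ K ^ p := Real.rpow_le_rpow hX0 h1 hp0.le
    have h3 : X ^ p = 2 ^ (p+1) * B / δ := by
      rw [hXdef, one_div, Real.rpow_inv_rpow (by positivity) hp0']
    linarith
  -- bound A on [-(M+K), M+K]
  obtain ⟨A₀, hA₀⟩ := (isCompact_Icc (a := -(M+K)) (b := M+K)).exists_bound_of_continuousOn
    hN.continuousOn
  set A : ℝ := max A₀ 0 with hAdef
  have hA0 : 0 ≤ A := le_max_right _ _
  have hAbd : ∀ x : ℝ, |x| ≤ M + K → |N x| ≤ A := by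
    intro x hx
    have hx' : x ∈ Set.Icc (-(M+K)) (M+K) :=
      ⟨by linarith [neg_abs_le x], by linarith [le_abs_self x]⟩
    have := hA₀ x hx'
    rw [Real.norm_eq_abs] at this
    exact this.trans (le_max_left _ _)
  set C : ℝ := max (2 ^ (p+1) / δ) (max (K ^ (p+1)) (2*K*A + 1)) with hCdef
  have hC1 : 2*K*A + 1 ≤ C := le_trans (le_max_right _ _) (le_max_right _ _)
  have hC0 : (0:ℝ) < C := lt_of_lt_of_le (by nlinarith) hC1
  have hCK : K ^ (p+1) ≤ C := le_trans (le_max_left _ _) (le_max_right _ _)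
  have hCδ : 2 ^ (p+1) / δ ≤ C := le_max_left _ _
  refine ⟨C, hC0, ?_⟩
  intro v V hV
  set d : ℝ := v - V with hddef
  have habsV : -M ≤ V ∧ V ≤ M := ⟨by linarith [neg_abs_le V], by linarith [le_abs_self V]⟩
  have hq0 : 0 ≤ |d| ^ (p+1) := Real.rpow_nonneg (abs_nonneg d) _
  rcases le_or_gt |d| K with hsmall | hlarge
  · -- small case
    have hvabs : |v| ≤ M + K := by
      have h := abs_sub_abs_le_abs_sub v V
      have hdd : |v - V| ≤ K := hsmall
      linarith
    have hNv := abs_le.1 (hAbd v hvabs)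
    have hNV := abs_le.1 (hAbd V (by linarith [le_abs_self V, (abs_nonneg V).trans hV, hK0.le]))
    have hdle := abs_le.1 hsmall
    have h1 : (v - V) * (N v - N V) ≤ 2*K*A := by
      have e1 : 0 ≤ (K - d) * (2*A + (N v - N V)) := by
        apply mul_nonneg <;> [skip; skip] <;> · simp only [hddef] at *; linarith [hdle.1, hdle.2]
      have e2 : 0 ≤ (K + d) * (2*A - (N v - N V)) := by
        apply mul_nonneg <;> · simp only [hddef] at *; linarith [hdle.1, hdle.2]
      nlinarith [e1, e2]
    have h2 : |d| ^ (p+1) ≤ K ^ (p+1) := Real.rpow_le_rpow (abs_nonneg d) hsmall (by linarith)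
    have h3 : (1/C) * |d| ^ (p+1) ≤ 1 := by
      rw [div_mul_eq_mul_div, one_mul, div_le_one hC0]
      exact h2.trans hCK
    have : |v - V| = |d| := by rw [hddef]
    rw [this]
    linarith
  · -- large case
    have hd1 : 1 + 3*M + R + X ≤ |d| := by
      have : K ≤ |d| := hlarge.le
      simp only [hKdef] at this; linarith
    have hdne : d ≠ 0 := by
      intro h; rw [h, abs_zero] at hd1; linarith [hM.le, hR.le]
    set a : ℝ := (|d|/2) ^ p with hadef
    have ha0 : 0 ≤ a := Real.rpow_nonneg (by positivity) _
    -- key: d * N v ≤ -(δ * a * |d|)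
    have hkey : d * N v ≤ -(δ * a * |d|) := by
      rcases le_or_gt 0 d with hd0 | hd0
      · have hdabs : |d| = d := abs_of_nonneg hd0
        have hvR : R ≤ v := by
          have : v = V + d := by rw [hddef]; ring
          rw [this]; rw [hdabs] at hd1; linarith [habsV.1, hM.le]
        have hvhalf : |d|/2 ≤ v := by
          have : v = V + d := by rw [hddef]; ring
          rw [this]; rw [hdabs] at hd1 ⊢; linarith [habsV.1, hR.le]
        have hrp : a ≤ v ^ p := Real.rpow_le_rpow (by positivity) hvhalf hp0.le
        have hNvle : N v ≤ -δ * v ^ p := hconf₁ v hvR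
        have h1 : d * N v ≤ d * (-δ * v ^ p) := mul_le_mul_of_nonneg_left hNvle hd0
        have h2 : δ * d * a ≤ δ * d * (v ^ p) :=
          mul_le_mul_of_nonneg_left hrp (by positivity)
        have h3 : d * (-δ * v ^ p) = -(δ * d * (v ^ p)) := by ring
        rw [hdabs]; linarith
      · have hdabs : |d| = -d := abs_of_neg hd0
        have hvR : v ≤ -R := by
          have : v = V + d := by rw [hddef]; ring
          rw [this]; rw [hdabs] at hd1; linarith [habsV.2, hM.le]
        have hvhalf : |d|/2 ≤ |v| := by
          have hv0 : v ≤ 0 := by linarith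
          have hvabs : |v| = -v := abs_of_nonpos hv0
          have : v = V + d := by rw [hddef]; ring
          rw [hvabs, this]; rw [hdabs] at hd1 ⊢; linarith [habsV.2, hR.le]
        have hrp : a ≤ |v| ^ p := Real.rpow_le_rpow (by positivity) hvhalf hp0.le
        have hNvge : δ * a ≤ N v := le_trans (mul_le_mul_of_nonneg_left hrp hδ.le) (hconf₂ v hvR)
        have h1 : d * N v ≤ d * (δ * a) := mul_le_mul_of_nonpos_left hNvge hd0.le
        have h2 : d * (δ * a) = -(δ * a * (-d)) := by ring
        rw [hdabs]; linarith
    have hNVb := abs_le.1 (hBbd V hV)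
    have hdNV : -(d * N V) ≤ |d| * B := by
      calc -(d * N V) ≤ |d * N V| := neg_le_abs _
        _ = |d| * |N V| := abs_mul _ _
        _ ≤ |d| * B := mul_le_mul_of_nonneg_left (hBbd V hV) (abs_nonneg d)
    -- 2B ≤ δ * a
    have hdp : K ^ p ≤ |d| ^ p := Real.rpow_le_rpow hK0.le hlarge.le hp0.le
    have hasplit : a = |d| ^ p / 2 ^ p := Real.div_rpow (abs_nonneg d) (by norm_num : (0:ℝ) ≤ 2) p
    have hB2 : 2 * B ≤ δ * a := by
      have h1 : 2 ^ (p+1) * B / δ ≤ |d| ^ p := hKp.trans hdp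
      have h2 : 2 ^ (p+1) * B ≤ δ * |d| ^ p := by
        rw [div_le_iff₀ hδ] at h1; linarith
      rw [h2split] at h2
      have h3 : δ * a = δ * |d| ^ p / 2 ^ p := by rw [hasplit]; ring
      rw [h3, le_div_iff₀ h2pp]
      linarith
    have hdpos : 0 < |d| := abs_pos.2 hdne
    -- combine
    have hmain : (v - V) * (N v - N V) ≤ -(δ/2 * a * |d|) := by
      have : (v - V) * (N v - N V) = d * N v + -(d * N V) := by rw [hddef]; ring
      rw [this]
      have h3 : 2 * B * |d| ≤ δ * a * |d| :=
        mul_le_mul_of_nonneg_right hB2 (abs_nonneg d)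
      linarith
    have hq : |d| ^ (p+1) = |d| ^ p * |d| := Real.rpow_add_one (ne_of_gt hdpos) p
    have heq : δ/2 * a * |d| = (δ / 2 ^ (p+1)) * |d| ^ (p+1) := by
      rw [hasplit, hq, h2split]; field_simp
    have hinv : 1/C ≤ δ / 2 ^ (p+1) := by
      rw [div_le_div_iff₀ hC0 h2p, one_mul]
      rw [div_le_iff₀ hδ] at hCδ
      linarith
    have h4 : (1/C) * |d| ^ (p+1) ≤ (δ / 2 ^ (p+1)) * |d| ^ (p+1) :=
      mul_le_mul_of_nonneg_right hinv hq0
    have : |v - V| = |d| := by rw [hddef]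
    rw [this]
    rw [heq] at hmain
    linarith
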